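/- For every nonnegative integer k and r ∈ {0,...,5}, the map λ ↦ (μ,τ) given by the unique decomposition λ = μ + V·τ (V having columns (6,0,0),(3,3,0),(2,2,2), τ ∈ ℤ≥0³, μ in the fundamental parallelepiped) is a bijection from the set of partitions of 6k+r into exactly 3 positive parts onto the disjoint union (H_r × T_k) ∪ (H_{r+6} × T_{k−1}) ∪ (H_{r+12} × T_{k−2}), where H_i is the set of fundamental-parallelepiped partitions of height i and T_j = {τ ∈ ℤ≥0³ : τ₁+τ₂+τ₃ = j} (empty if j < 0). -/
import Mathlib


open Finset

/-- The set of partitions of `n` into exactly 3 positive parts, as triples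
`(a, b, c)` with `a ≥ b ≥ c ≥ 1` and `a + b + c = n`. -/
def P3 (n : ℕ) : Finset (ℕ × ℕ × ℕ) :=
  (Finset.range (n+1) ×ˢ Finset.range (n+1) ×ˢ Finset.range (n+1)).filter
    (fun t => t.2.1 ≤ t.1 ∧ t.2.2 ≤ t.2.1 ∧ 1 ≤ t.2.2 ∧ t.1 + t.2.1 + t.2.2 = n)

/-- `p3 n` is the number of partitions of `n` into exactly 3 positive parts. -/
def p3 (n : ℕ) : ℕ := (P3 n).card

/-- `H i`: fundamental-parallelepiped partitions of height `i`. -/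
def H (i : ℕ) : Finset (ℕ × ℕ × ℕ) :=
  (Finset.range (i+1) ×ˢ Finset.range (i+1) ×ˢ Finset.range (i+1)).filter
    (fun μ : ℕ × ℕ × ℕ =>
      1 ≤ μ.2.2 ∧ μ.2.2 ≤ μ.2.1 ∧ μ.2.1 ≤ μ.1 ∧
        μ.1 - μ.2.1 ≤ 5 ∧ μ.2.1 - μ.2.2 ≤ 2 ∧ μ.2.2 ≤ 2 ∧
        μ.1 + μ.2.1 + μ.2.2 = i)

/-- `T j`: nonnegative integer triples with coordinate sum `j` (empty if `j < 0`). -/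
def T (j : ℤ) : Finset (ℕ × ℕ × ℕ) :=
  (Finset.range (j.toNat+1) ×ˢ Finset.range (j.toNat+1) ×ˢ Finset.range (j.toNat+1)).filter
    (fun τ : ℕ × ℕ × ℕ => ((τ.1 : ℤ) + τ.2.1 + τ.2.2 = j))

/-- Reassemble a pair `(μ, τ)` into the partition `μ + V·τ`, where `V` has
columns `(6,0,0)`, `(3,3,0)`, `(2,2,2)`. -/
def recomb (x : (ℕ × ℕ × ℕ) × (ℕ × ℕ × ℕ)) : ℕ × ℕ × ℕ :=
  (x.1.1 + (6 * x.2.1 + 3 * x.2.2.1 + 2 * x.2.2.2),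
   x.1.2.1 + (3 * x.2.2.1 + 2 * x.2.2.2),
   x.1.2.2 + 2 * x.2.2.2)

/-- The target set `(H r × T k) ∪ (H (r+6) × T (k-1)) ∪ (H (r+12) × T (k-2))`. -/
def Q (k : ℕ) (r : ℕ) : Finset ((ℕ × ℕ × ℕ) × (ℕ × ℕ × ℕ)) :=
  (H r ×ˢ T (k : ℤ)) ∪ (H (r + 6) ×ˢ T ((k : ℤ) - 1)) ∪ (H (r + 12) ×ˢ T ((k : ℤ) - 2))

lemma mem_P3 (n a b c : ℕ) :
    (a, b, c) ∈ P3 n ↔ b ≤ a ∧ c ≤ b ∧ 1 ≤ c ∧ a + b + c = n := by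
  simp only [P3, Finset.mem_filter, Finset.mem_product, Finset.mem_range]
  constructor
  · rintro ⟨-, h⟩; exact h
  · intro h; refine ⟨⟨?_, ?_, ?_⟩, h⟩ <;> omega

lemma mem_H (i a b c : ℕ) :
    (a, b, c) ∈ H i ↔ 1 ≤ c ∧ c ≤ b ∧ b ≤ a ∧
      a - b ≤ 5 ∧ b - c ≤ 2 ∧ c ≤ 2 ∧ a + b + c = i := by
  simp only [H, Finset.mem_filter, Finset.mem_product, Finset.mem_range]
  constructor
  · rintro ⟨-, h⟩; exact h
  · intro h; refine ⟨⟨?_, ?_, ?_⟩, h⟩ <;> omega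

lemma mem_T (j : ℤ) (a b c : ℕ) :
    (a, b, c) ∈ T j ↔ (a : ℤ) + b + c = j := by
  simp only [T, Finset.mem_filter, Finset.mem_product, Finset.mem_range]
  constructor
  · rintro ⟨-, h⟩; exact h
  · intro h; refine ⟨⟨?_, ?_, ?_⟩, h⟩ <;> omega

lemma mem_Q (k r : ℕ) (x : (ℕ × ℕ × ℕ) × (ℕ × ℕ × ℕ)) :
    x ∈ Q k r ↔ (x.1 ∈ H r ∧ x.2 ∈ T (k : ℤ)) ∨
      (x.1 ∈ H (r + 6) ∧ x.2 ∈ T ((k : ℤ) - 1)) ∨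
      (x.1 ∈ H (r + 12) ∧ x.2 ∈ T ((k : ℤ) - 2)) := by
  simp [Q, Finset.mem_union, Finset.mem_product, or_assoc]

/-- explicit decomposition -/
def dec0 (x : ℕ × ℕ × ℕ) : (ℕ × ℕ × ℕ) × (ℕ × ℕ × ℕ) :=
  (((x.1 - x.2.1) % 6 + (x.2.1 - x.2.2) % 3 + (1 + (x.2.2 - 1) % 2),
    (x.2.1 - x.2.2) % 3 + (1 + (x.2.2 - 1) % 2),
    1 + (x.2.2 - 1) % 2),
   ((x.1 - x.2.1) / 6, (x.2.1 - x.2.2) / 3, (x.2.2 - 1) / 2))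

theorem stmt11 (k r : ℕ) (hr : r ≤ 5) :
    ∃ dec : ℕ × ℕ × ℕ → (ℕ × ℕ × ℕ) × (ℕ × ℕ × ℕ),
      (∀ lam ∈ P3 (6 * k + r), recomb (dec lam) = lam) ∧
      Set.BijOn dec (P3 (6 * k + r) : Set (ℕ × ℕ × ℕ)) (Q k r : Set _) := by
  refine ⟨dec0, ?_, ?_, ?_, ?_⟩
  · rintro ⟨a, b, c⟩ h
    rw [mem_P3] at h
    simp only [dec0, recomb, Prod.mk.injEq]
    refine ⟨?_, ?_, ?_⟩ <;> omega
  · -- maps to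
    rintro ⟨a, b, c⟩ h
    rw [Finset.mem_coe, mem_P3] at h
    rw [Finset.mem_coe, mem_Q]
    simp only [dec0, mem_H, mem_T]
    omega
  · -- InjOn
    rintro ⟨a, b, c⟩ h ⟨a', b', c'⟩ h' he
    rw [Finset.mem_coe, mem_P3] at h h'
    simp only [dec0, Prod.mk.injEq] at he
    simp only [Prod.mk.injEq]
    obtain ⟨⟨h1, h2, h3⟩, h4, h5, h6⟩ := he
    refine ⟨?_, ?_, ?_⟩ <;> omega
  · -- SurjOn
    rintro ⟨⟨m1, m2, m3⟩, ⟨t1, t2, t3⟩⟩ h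
    rw [Finset.mem_coe, mem_Q] at h
    simp only [mem_H, mem_T] at h
    refine ⟨recomb ((m1, m2, m3), (t1, t2, t3)), ?_, ?_⟩
    · rw [Finset.mem_coe]
      simp only [recomb, mem_P3]
      omega
    · simp only [dec0, recomb, Prod.mk.injEq]
      obtain ⟨⟨h1, h2, h3, h4, h5, h6, h7⟩, h8⟩ | ⟨⟨h1, h2, h3, h4, h5, h6, h7⟩, h8⟩ |
        ⟨⟨h1, h2, h3, h4, h5, h6, h7⟩, h8⟩ := h <;>
      · have e1 : m1 + (6 * t1 + 3 * t2 + 2 * t3) - (m2 + (3 * t2 + 2 * t3)) =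
            (m1 - m2) + 6 * t1 := by omega
        have e2 : m2 + (3 * t2 + 2 * t3) - (m3 + 2 * t3) = (m2 - m3) + 3 * t2 := by omega
        have e3 : m3 + 2 * t3 - 1 = (m3 - 1) + 2 * t3 := by omega
        rw [e1, e2, e3]
        have f1 : ((m1 - m2) + 6 * t1) % 6 = m1 - m2 := by omega
        have f2 : ((m1 - m2) + 6 * t1) / 6 = t1 := by omega
        have f3 : ((m2 - m3) + 3 * t2) % 3 = m2 - m3 := by omega
        have f4 : ((m2 - m3) + 3 * t2) / 3 = t2 := by omega
        have f5 : ((m3 - 1) + 2 * t3) % 2 = m3 - 1 := by omega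
        have f6 : ((m3 - 1) + 2 * t3) / 2 = t3 := by omega
        rw [f1, f2, f3, f4, f5, f6]
        refine ⟨⟨?_, ?_, ?_⟩, ?_, ?_, ?_⟩ <;> omega
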